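/- arXiv:1903.04148 — 2 statements merged into one kernel-verified Lean document; each statement's English description precedes it below -/
import Mathlib

section
/- Let L ⊂ S^d be a lune and let C ⊂ L be a spherically convex body such that F = C ∩ corn(L) is non-empty, where corn(L) is the set of corners of L. Then at least one extreme point of C lies in corn(L). -/
open scoped RealInnerProductSpace

noncomputable section

namespace SphericalGeom

/-- Euclidean space `E^n`. -/
abbrev Esp (n : ℕ) : Type := EuclideanSpace ℝ (Fin n)

/-- The unit sphere centered at the origin of `E^n` (so `S^d` for `n = d+1`). -/
def unitSphere (n : ℕ) : Set (Esp n) := Metric.sphere 0 1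

/-- Spherical (geodesic) distance between points of the unit sphere. -/
def sdist {n : ℕ} (a b : Esp n) : ℝ := Real.arccos ⟪a, b⟫

/-- The hemisphere `H(c)` with center `c`: points of the sphere within spherical
distance `π/2` from `c`. -/
def hemi {n : ℕ} (c : Esp n) : Set (Esp n) :=
  {x ∈ unitSphere n | sdist c x ≤ Real.pi / 2}

/-- The boundary great subsphere of the hemisphere centered at `c`. -/
def hemiBd {n : ℕ} (c : Esp n) : Set (Esp n) :=
  {x ∈ unitSphere n | sdist c x = Real.pi / 2}

/-- The spherical arc connecting `a` and `b` (for non-antipodal `a b` of the sphere,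
this is the shorter great-circle arc joining them). -/
def arc {n : ℕ} (a b : Esp n) : Set (Esp n) :=
  {z | ∃ s t : ℝ, 0 ≤ s ∧ 0 ≤ t ∧ s • a + t • b ≠ 0 ∧
    z = ‖s • a + t • b‖⁻¹ • (s • a + t • b)}

/-- A subset of the sphere, containing no pair of antipodes, which together with
every two of its points contains the arc connecting them. -/
def IsSphConvex {n : ℕ} (C : Set (Esp n)) : Prop :=
  C ⊆ unitSphere n ∧ (∀ x ∈ C, -x ∉ C) ∧ ∀ a ∈ C, ∀ b ∈ C, arc a b ⊆ C

/-- A spherically convex body: a closed spherically convex set with nonempty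
interior relative to the sphere. -/
def IsSphConvexBody {n : ℕ} (C : Set (Esp n)) : Prop :=
  IsClosed C ∧ IsSphConvex C ∧
    ∃ x ∈ C, ∃ ε : ℝ, 0 < ε ∧ Metric.ball x ε ∩ unitSphere n ⊆ C

/-- The hemisphere centered at `k` supports `C`: it contains `C` and its boundary
meets `C`. -/
def Supports {n : ℕ} (k : Esp n) (C : Set (Esp n)) : Prop :=
  k ∈ unitSphere n ∧ C ⊆ hemi k ∧ ∃ p ∈ C, sdist k p = Real.pi / 2

/-- The hemispheres centered at `g` and `h` are different and not opposite, so that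
`H(g) ∩ H(h)` is a lune. -/
def IsLunePair {n : ℕ} (g h : Esp n) : Prop :=
  g ∈ unitSphere n ∧ h ∈ unitSphere n ∧ g ≠ h ∧ g ≠ -h

/-- The center of the bounding `(d-1)`-dimensional hemisphere `H(g)/H(h)` of the
lune `H(g) ∩ H(h)`: the normalized projection of `h` onto the hyperplane `g^⊥`. -/
def luneFaceCenter {n : ℕ} (g h : Esp n) : Esp n :=
  ‖h - ⟪g, h⟫ • g‖⁻¹ • (h - ⟪g, h⟫ • g)

/-- The thickness of the lune `H(g) ∩ H(h)`: the spherical distance between the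
centers of its two bounding hemispheres. -/
def luneThickness {n : ℕ} (g h : Esp n) : ℝ :=
  sdist (luneFaceCenter g h) (luneFaceCenter h g)

/-- The set of corners of the lune `H(g) ∩ H(h)`, i.e. `(G/H) ∩ (H/G)`. -/
def luneCorners {n : ℕ} (g h : Esp n) : Set (Esp n) := hemiBd g ∩ hemiBd h

/-- The width of `C` determined by the supporting hemisphere `H(k)`: the minimum
thickness of a lune `H(k) ∩ K'` over all hemispheres `K' ≠ H(k)` supporting `C`. -/
def widthAt {n : ℕ} (C : Set (Esp n)) (k : Esp n) : ℝ :=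
  sInf {t | ∃ k', Supports k' C ∧ k' ≠ k ∧ k' ≠ -k ∧ t = luneThickness k k'}

/-- The thickness `Δ(C)`: the minimum of `width_K(C)` over supporting hemispheres. -/
def thickness {n : ℕ} (C : Set (Esp n)) : ℝ :=
  sInf {t | ∃ k, Supports k C ∧ t = widthAt C k}

/-- The spherical diameter: the maximum spherical distance of two points of `C`. -/
def sdiam {n : ℕ} (C : Set (Esp n)) : ℝ :=
  sSup {t | ∃ p ∈ C, ∃ q ∈ C, t = sdist p q}

/-- `C` is of constant width `w`. -/
def IsConstWidth {n : ℕ} (C : Set (Esp n)) (w : ℝ) : Prop :=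
  ∀ k, Supports k C → widthAt C k = w

/-- A reduced body: every convex body properly contained in it has strictly
smaller thickness. -/
def IsReduced {n : ℕ} (R : Set (Esp n)) : Prop :=
  IsSphConvexBody R ∧ ∀ Z : Set (Esp n), IsSphConvexBody Z → Z ⊆ R → Z ≠ R →
    thickness Z < thickness R

/-- `e` is an extreme point of the convex body `C`: `C \ {e}` is convex. -/
def IsExtremePt {n : ℕ} (C : Set (Esp n)) (e : Esp n) : Prop :=
  e ∈ C ∧ IsSphConvex (C \ {e})

/-- The boundary of `C` relative to the sphere. -/
def sphBoundary {n : ℕ} (C : Set (Esp n)) : Set (Esp n) :=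
  closure C ∩ closure (unitSphere n \ C)

/-- `D` is of constant diameter `δ`: its diameter equals `δ` and every boundary
point realizes the distance `δ` to some boundary point. -/
def IsConstDiameter {n : ℕ} (D : Set (Esp n)) (δ : ℝ) : Prop :=
  sdiam D = δ ∧ ∀ p ∈ sphBoundary D, ∃ p' ∈ sphBoundary D, sdist p p' = δ

/-! The corners of the lune cut out a face `F = C ∩ corn(L)` of `C`: the functionals `⟪g, ·⟫` and
`⟪h, ·⟫` are nonnegative on `C` and vanish on `F`, so an arc of `C` passing through `F` at an
interior point has both endpoints in `F`. Being compact, spherically convex and free of antipodes,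
`F` spans a convex cone missing `0`, so some linear functional `f` is negative on `F`. A maximizer
of `f` on `F` is then an extreme point of `F`, and extreme points of a face are extreme in `C`. -/

open scoped Pointwise

theorem _root_.isCompact_convexHull {E : Type*} [NormedAddCommGroup E] [NormedSpace ℝ E]
    [FiniteDimensional ℝ E] {s : Set E} (hs : IsCompact s) : IsCompact (convexHull ℝ s) := by
  let comb (k : ℕ) : (Fin k → ℝ) × (Fin k → E) → E := fun p => ∑ i, p.1 i • p.2 i
  -- Carathéodory: a point of the hull is a convex combination of at most `finrank + 1` points
  suffices hull_eq : convexHull ℝ s = ⋃ k ∈ Finset.range (Module.finrank ℝ E + 2),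
      comb k '' (stdSimplex ℝ (Fin k) ×ˢ Set.univ.pi fun _ => s) by
    rw [hull_eq]
    exact (Finset.range _).isCompact_biUnion fun k _ =>
      ((isCompact_stdSimplex ℝ (Fin k)).prod (isCompact_univ_pi fun _ => hs)).image
        (by fun_prop)
  apply Set.Subset.antisymm
  · intro x hx
    obtain ⟨ι, _, z, w, hzs, hz, hw, hw1, rfl⟩ := eq_pos_convex_span_of_mem_convexHull hx
    let e := Fintype.equivFin ι
    refine Set.mem_biUnion (x := Fintype.card ι)
      (Finset.mem_range.2 (Nat.lt_succ_of_le
        (hz.card_le_finrank_succ.trans (Nat.succ_le_succ (Submodule.finrank_le _)))))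
      ⟨(w ∘ e.symm, z ∘ e.symm), ⟨⟨fun i => (hw _).le, ?_⟩, fun i _ => hzs ⟨_, rfl⟩⟩, ?_⟩
    · exact (e.symm.sum_comp w).trans hw1
    · exact e.symm.sum_comp fun i => w i • z i
  · simp only [Set.iUnion_subset_iff]
    rintro k - _ ⟨⟨w, z⟩, ⟨⟨hw0, hw1⟩, hz⟩, rfl⟩
    exact (convex_convexHull ℝ s).sum_mem (fun i _ => hw0 i) hw1
      fun i _ => subset_convexHull ℝ s (hz i trivial)

section NormedSpace

variable {E : Type*} [NormedAddCommGroup E] [NormedSpace ℝ E] {a b : E} {s t : ℝ}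

theorem inv_norm_smul_smul_of_norm_eq_one (ha : ‖a‖ = 1) (hs : 0 < s) :
    ‖s • a‖⁻¹ • (s • a) = a := by
  rw [norm_smul, Real.norm_of_nonneg hs.le, ha, mul_one, inv_smul_smul₀ hs.ne']

theorem eq_neg_of_smul_add_smul_eq_zero (ha : ‖a‖ = 1) (hb : ‖b‖ = 1) (hs : 0 < s) (ht : 0 < t)
    (h : s • a + t • b = 0) : a = -b := by
  have hab : s • a = t • -b := by rw [smul_neg]; exact eq_neg_of_add_eq_zero_left h
  have hst : s = t := by
    simpa [norm_smul, ha, hb, abs_of_pos hs, abs_of_pos ht] using congrArg norm hab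
  subst hst
  exact smul_right_injective E hs.ne' hab

theorem norm_smul_add_smul_lt [StrictConvexSpace ℝ E] (ha : ‖a‖ = 1) (hb : ‖b‖ = 1)
    (hab : a ≠ b) (hs : 0 < s) (ht : 0 < t) : ‖s • a + t • b‖ < s + t := by
  have hray : ¬SameRay ℝ (s • a) (t • b) := fun hray => hab <| by
    rw [← inv_norm_smul_smul_of_norm_eq_one ha hs, ← inv_norm_smul_smul_of_norm_eq_one hb ht]
    exact hray.inv_norm_smul_eq (smul_ne_zero hs.ne' (norm_ne_zero_iff.1 (by simp [ha])))
      (smul_ne_zero ht.ne' (norm_ne_zero_iff.1 (by simp [hb])))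
  simpa [norm_smul, ha, hb, abs_of_pos hs, abs_of_pos ht] using norm_add_lt_of_not_sameRay hray

end NormedSpace

variable {n : ℕ}

theorem mem_unitSphere_iff {x : Esp n} : x ∈ unitSphere n ↔ ‖x‖ = 1 :=
  mem_sphere_zero_iff_norm

theorem mem_hemi_iff {c x : Esp n} : x ∈ hemi c ↔ x ∈ unitSphere n ∧ 0 ≤ ⟪c, x⟫ := by
  simp only [hemi, sdist, Set.mem_ofPred_eq, Real.arccos_le_pi_div_two]

theorem mem_hemiBd_iff {c x : Esp n} : x ∈ hemiBd c ↔ x ∈ unitSphere n ∧ ⟪c, x⟫ = 0 := by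
  simp only [hemiBd, sdist, Set.mem_ofPred_eq, Real.arccos_eq_pi_div_two]

theorem isClosed_hemiBd (c : Esp n) : IsClosed (hemiBd c) := by
  have : hemiBd c = unitSphere n ∩ {x | ⟪c, x⟫ = 0} := Set.ext fun x => mem_hemiBd_iff
  rw [this]
  exact Metric.isClosed_sphere.inter (isClosed_eq (by fun_prop) continuous_const)

theorem arc_subset_hemiBd {a b c : Esp n} (ha : a ∈ hemiBd c) (hb : b ∈ hemiBd c) :
    arc a b ⊆ hemiBd c := by
  rintro _ ⟨s, t, -, -, hv, rfl⟩
  refine mem_hemiBd_iff.2 ⟨mem_unitSphere_iff.2 (norm_smul_inv_norm hv), ?_⟩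
  rw [real_inner_smul_right, inner_add_right, real_inner_smul_right, real_inner_smul_right,
    (mem_hemiBd_iff.1 ha).2, (mem_hemiBd_iff.1 hb).2]
  ring

theorem IsSphConvex.inter {A S : Set (Esp n)} (hA : IsSphConvex A)
    (hS : ∀ a ∈ S, ∀ b ∈ S, arc a b ⊆ S) : IsSphConvex (A ∩ S) :=
  ⟨fun _ hx => hA.1 hx.1, fun x hx hnx => hA.2.1 x hx.1 hnx.1,
    fun a ha b hb => Set.subset_inter (hA.2.2 a ha.1 b hb.1) (hS a ha.2 b hb.2)⟩

def openArc (a b : Esp n) : Set (Esp n) :=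
  {z | ∃ s t : ℝ, 0 < s ∧ 0 < t ∧ s • a + t • b ≠ 0 ∧ z = ‖s • a + t • b‖⁻¹ • (s • a + t • b)}

theorem openArc_subset_arc (a b : Esp n) : openArc a b ⊆ arc a b :=
  fun _ ⟨s, t, hs, ht, hv, hz⟩ => ⟨s, t, hs.le, ht.le, hv, hz⟩

theorem eq_or_eq_or_mem_openArc_of_mem_arc {a b z : Esp n} (ha : ‖a‖ = 1) (hb : ‖b‖ = 1)
    (hz : z ∈ arc a b) : z = a ∨ z = b ∨ z ∈ openArc a b := by
  obtain ⟨s, t, hs, ht, hv, rfl⟩ := hz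
  rcases hs.eq_or_lt with rfl | hs
  · have ht : 0 < t := ht.lt_of_ne (by rintro rfl; simp at hv)
    simp only [zero_smul, zero_add, inv_norm_smul_smul_of_norm_eq_one hb ht, true_or, or_true]
  rcases ht.eq_or_lt with rfl | ht
  · simp only [zero_smul, add_zero, inv_norm_smul_smul_of_norm_eq_one ha hs, true_or]
  · exact Or.inr (Or.inr ⟨s, t, hs, ht, hv, rfl⟩)

theorem IsSphConvex.isExtremePt_of_notMem_openArc {A : Set (Esp n)} {e : Esp n}
    (hA : IsSphConvex A) (he : e ∈ A)
    (h : ∀ a ∈ A, ∀ b ∈ A, a ≠ e → b ≠ e → e ∉ openArc a b) : IsExtremePt A e := by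
  refine ⟨he, fun x hx => hA.1 hx.1, fun x hx hnx => hA.2.1 x hx.1 hnx.1, ?_⟩
  rintro a ⟨ha, hae⟩ b ⟨hb, hbe⟩ z hz
  refine ⟨hA.2.2 a ha b hb hz, ?_⟩
  rintro rfl
  rcases eq_or_eq_or_mem_openArc_of_mem_arc (mem_unitSphere_iff.1 (hA.1 ha))
    (mem_unitSphere_iff.1 (hA.1 hb)) hz with rfl | rfl | hz
  · exact hae rfl
  · exact hbe rfl
  · exact h a ha b hb hae hbe hz

theorem IsSphConvex.smul_add_smul_mem_Ioi_smul {F : Set (Esp n)} (hF : IsSphConvex F)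
    {a b : Esp n} (ha : a ∈ F) (hb : b ∈ F) {s t : ℝ} (hs : 0 < s) (ht : 0 < t) :
    s • a + t • b ∈ Set.Ioi (0 : ℝ) • F := by
  have hv : s • a + t • b ≠ 0 := fun hv => hF.2.1 b hb <| by
    rwa [← eq_neg_of_smul_add_smul_eq_zero (mem_unitSphere_iff.1 (hF.1 ha))
      (mem_unitSphere_iff.1 (hF.1 hb)) hs ht hv]
  exact ⟨‖s • a + t • b‖, norm_pos_iff.2 hv, _,
    hF.2.2 a ha b hb (openArc_subset_arc a b ⟨s, t, hs, ht, hv, rfl⟩),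
    smul_inv_smul₀ (norm_ne_zero_iff.2 hv) _⟩

theorem IsSphConvex.convex_Ioi_smul {F : Set (Esp n)} (hF : IsSphConvex F) :
    Convex ℝ (Set.Ioi (0 : ℝ) • F) := by
  refine convex_iff_forall_pos.2 ?_
  rintro _ ⟨r, hr, x, hx, rfl⟩ _ ⟨r', hr', y, hy, rfl⟩ a b ha hb -
  simp only [smul_smul]
  exact hF.smul_add_smul_mem_Ioi_smul hx hy (mul_pos ha hr) (mul_pos hb hr')

theorem IsSphConvex.zero_notMem_convexHull {F : Set (Esp n)} (hF : IsSphConvex F) :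
    (0 : Esp n) ∉ convexHull ℝ F := by
  intro h0
  have hsub : F ⊆ Set.Ioi (0 : ℝ) • F := fun y hy => ⟨1, Set.mem_Ioi.2 one_pos, y, hy, one_smul ℝ y⟩
  obtain ⟨r, hr, y, hy, hry⟩ := convexHull_min hsub hF.convex_Ioi_smul h0
  have hy0 : y ≠ 0 := norm_ne_zero_iff.1 (by simp [mem_unitSphere_iff.1 (hF.1 hy)])
  exact smul_ne_zero (Set.mem_Ioi.1 hr).ne' hy0 hry

theorem IsSphConvex.exists_forall_neg {F : Set (Esp n)} (hF : IsSphConvex F)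
    (hc : IsCompact F) : ∃ f : StrongDual ℝ (Esp n), ∀ x ∈ F, f x < 0 := by
  obtain ⟨f, u, hfu, hu⟩ := geometric_hahn_banach_closed_point (convex_convexHull ℝ F)
    (isCompact_convexHull hc).isClosed hF.zero_notMem_convexHull
  exact ⟨f, fun x hx => (hfu x (subset_convexHull ℝ F hx)).trans (by simpa using hu)⟩

theorem IsSphConvex.isExtremePt_of_isMaxOn {F : Set (Esp n)} (hF : IsSphConvex F)
    (f : StrongDual ℝ (Esp n)) {e : Esp n} (he : e ∈ F) (hfe : f e < 0) (hmax : IsMaxOn f F e) :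
    IsExtremePt F e := by
  refine hF.isExtremePt_of_notMem_openArc he fun a ha b hb hae _ ⟨s, t, hs, ht, hv, hz⟩ => ?_
  have ha1 := mem_unitSphere_iff.1 (hF.1 ha)
  -- `‖v‖ f e = s f a + t f b ≤ (s + t) f e` with `f e < 0` forces `‖v‖ = s + t`, hence `a = b`
  have hab : a = b := by
    by_contra hab
    have hlt := norm_smul_add_smul_lt ha1 (mem_unitSphere_iff.1 (hF.1 hb)) hab hs ht
    have hfv : ‖s • a + t • b‖ * f e = s * f a + t * f b := by
      rw [hz, map_smul, smul_eq_mul, ← mul_assoc, mul_inv_cancel₀ (norm_ne_zero_iff.2 hv),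
        one_mul, map_add, map_smul, map_smul, smul_eq_mul, smul_eq_mul]
    nlinarith [mul_le_mul_of_nonneg_left (hmax ha) hs.le,
      mul_le_mul_of_nonneg_left (hmax hb) ht.le]
  subst hab
  rw [← add_smul, inv_norm_smul_smul_of_norm_eq_one ha1 (add_pos hs ht)] at hz
  exact hae hz.symm

theorem IsSphConvex.exists_isExtremePt {F : Set (Esp n)} (hF : IsSphConvex F)
    (hc : IsCompact F) (hne : F.Nonempty) : ∃ e, IsExtremePt F e := by
  obtain ⟨f, hf⟩ := hF.exists_forall_neg hc
  obtain ⟨e, he, hmax⟩ := hc.exists_isMaxOn hne f.continuous.continuousOn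
  exact ⟨e, hF.isExtremePt_of_isMaxOn f he (hf e he) hmax⟩

/-- The spherical analogue of `IsExtreme`: `B` is a face of `A`. -/
def IsSphExtreme (A B : Set (Esp n)) : Prop :=
  B ⊆ A ∧ ∀ a ∈ A, ∀ b ∈ A, ∀ z ∈ B, z ∈ openArc a b → a ∈ B ∧ b ∈ B

theorem IsSphExtreme.trans {A B C : Set (Esp n)} (hAB : IsSphExtreme A B)
    (hBC : IsSphExtreme B C) : IsSphExtreme A C := by
  refine ⟨hBC.1.trans hAB.1, fun a ha b hb z hz hzab => ?_⟩
  obtain ⟨haB, hbB⟩ := hAB.2 a ha b hb z (hBC.1 hz) hzab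
  exact hBC.2 a haB b hbB z hz hzab

theorem isSphExtreme_inter_hemiBd {A : Set (Esp n)} {c : Esp n} (hA : A ⊆ hemi c) :
    IsSphExtreme A (A ∩ hemiBd c) := by
  refine ⟨Set.inter_subset_left, ?_⟩
  rintro a ha b hb _ ⟨-, hz⟩ ⟨s, t, hs, ht, hv, rfl⟩
  obtain ⟨ha1, hca⟩ := mem_hemi_iff.1 (hA ha)
  obtain ⟨hb1, hcb⟩ := mem_hemi_iff.1 (hA hb)
  have hsum : s * ⟪c, a⟫ + t * ⟪c, b⟫ = 0 := by
    have hcz := (mem_hemiBd_iff.1 hz).2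
    rw [real_inner_smul_right, inner_add_right, real_inner_smul_right,
      real_inner_smul_right] at hcz
    exact (mul_eq_zero.1 hcz).resolve_left (inv_ne_zero (norm_ne_zero_iff.2 hv))
  have hca0 : ⟪c, a⟫ = 0 :=
    (mul_eq_zero.1 (by linarith [mul_nonneg ht.le hcb, mul_nonneg hs.le hca])).resolve_left
      hs.ne'
  have hcb0 : ⟪c, b⟫ = 0 :=
    (mul_eq_zero.1 (by linarith [mul_nonneg ht.le hcb, mul_nonneg hs.le hca])).resolve_left
      ht.ne'
  exact ⟨⟨ha, mem_hemiBd_iff.2 ⟨ha1, hca0⟩⟩, hb, mem_hemiBd_iff.2 ⟨hb1, hcb0⟩⟩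

theorem IsSphExtreme.isExtremePt {A B : Set (Esp n)} (hA : IsSphConvex A)
    (hAB : IsSphExtreme A B) {e : Esp n} (he : IsExtremePt B e) : IsExtremePt A e := by
  refine hA.isExtremePt_of_notMem_openArc (hAB.1 he.1) fun a ha b hb hae hbe hz => ?_
  obtain ⟨haB, hbB⟩ := hAB.2 a ha b hb e he.1 hz
  exact (he.2.2.2 a ⟨haB, hae⟩ b ⟨hbB, hbe⟩ (openArc_subset_arc a b hz)).2 rfl

end SphericalGeom

open SphericalGeom Real

theorem extreme_point_in_corners_general (d : ℕ)
    (g h : Esp (d + 1))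
    (C : Set (Esp (d + 1))) (hC : IsSphConvexBody C)
    (hCL : C ⊆ hemi g ∩ hemi h)
    (hF : (C ∩ luneCorners g h).Nonempty) :
    ∃ e ∈ luneCorners g h, IsExtremePt C e := by
  obtain ⟨hCclosed, hCconv, -⟩ := hC
  have hext : IsSphExtreme C (C ∩ luneCorners g h) := by
    rw [luneCorners, ← Set.inter_assoc]
    exact (isSphExtreme_inter_hemiBd fun x hx => (hCL hx).1).trans
      (isSphExtreme_inter_hemiBd fun x hx => (hCL hx.1).2)
  have hconv : IsSphConvex (C ∩ luneCorners g h) := hCconv.inter fun a ha b hb =>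
    Set.subset_inter (arc_subset_hemiBd ha.1 hb.1) (arc_subset_hemiBd ha.2 hb.2)
  have hcpt : IsCompact (C ∩ luneCorners g h) :=
    (isCompact_sphere 0 1).of_isClosed_subset
      (hCclosed.inter ((isClosed_hemiBd g).inter (isClosed_hemiBd h))) fun _ hx => hCconv.1 hx.1
  obtain ⟨e, he⟩ := hconv.exists_isExtremePt hcpt hF
  exact ⟨e, he.1.2, hext.isExtremePt hCconv he⟩

/-- If a spherically convex body `C` contained in a lune `L` meets the
set of corners of `L`, then some extreme point of `C` is a corner of `L`. -/
theorem extreme_point_in_corners (d : ℕ) (hd : 2 ≤ d)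
    (g h : Esp (d + 1)) (hL : IsLunePair g h)
    (C : Set (Esp (d + 1))) (hC : IsSphConvexBody C)
    (hCL : C ⊆ hemi g ∩ hemi h)
    (hF : (C ∩ luneCorners g h).Nonempty) :
    ∃ e ∈ luneCorners g h, IsExtremePt C e :=
  extreme_point_in_corners_general d g h C hC hCL hF
end
end

section
/- Let C ⊂ S^d be a spherically convex body with diam(C) = π/2. Then there exist two points of C at spherical distance π/2 such that at least one of them is an extreme point of C. -/
open scoped RealInnerProductSpace

noncomputable section

/-!
Take `p, q ∈ C` with `sdist p q = π/2`, i.e. `⟪p, q⟫ = 0`. Since `diam C = π/2`, the functional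
`⟪q, ·⟫` is nonnegative on `C`, so `F = C ∩ q^⊥` is a face: an arc of `C` through a point of `F`
has both ends in `F`. For an interior point `x₀` of `C`, `⟪x₀, ·⟫` is strictly positive on `C`
(if `⟪x₀, m⟫ = 0`, rotating `x₀` slightly away from `m` stays in `C` but leaves the hemisphere
around `m`). A minimizer `e` of `⟪x₀, ·⟫` on the compact set `F` is then extreme in `C`, by strict
convexity of the Euclidean norm, and `sdist e q = π/2`.
-/

section InnerProductSpace

variable {E : Type*} [NormedAddCommGroup E] [InnerProductSpace ℝ E]

open NormedSpace Topology

theorem exists_norm_eq_one_dist_lt_inner_neg {x m : E} (hx : ‖x‖ = 1) (hm : ‖m‖ = 1)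
    (hxm : ⟪x, m⟫ = 0) {ε : ℝ} (hε : 0 < ε) :
    ∃ y : E, ‖y‖ = 1 ∧ dist y x < ε ∧ ⟪y, m⟫ < 0 := by
  set γ : ℝ → E := fun θ => Real.cos θ • x - Real.sin θ • m
  have hγ : Filter.Tendsto γ (𝓝[>] 0) (𝓝 x) := by
    have : Continuous γ := by fun_prop
    simpa [γ] using (this.tendsto 0).mono_left nhdsWithin_le_nhds
  obtain ⟨θ, hθε, hθ, hθπ⟩ := ((hγ.eventually (Metric.ball_mem_nhds x hε)).and
    (inter_mem_nhdsWithin (Set.Ioi 0) (Iio_mem_nhds Real.pi_pos))).exists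
  refine ⟨γ θ, ?_, hθε, ?_⟩
  · have : ‖γ θ‖ ^ 2 = 1 := by
      simp only [γ, norm_sub_sq_real, norm_smul, real_inner_smul_left, real_inner_smul_right,
        hxm, hx, hm, Real.norm_eq_abs, mul_pow, sq_abs]
      linarith [Real.cos_sq_add_sin_sq θ]
    exact (pow_eq_one_iff_of_nonneg (norm_nonneg _) two_ne_zero).1 this
  · have hmm : ⟪m, m⟫ = 1 := by rw [real_inner_self_eq_norm_sq, hm, one_pow]
    simp only [γ, inner_sub_left, real_inner_smul_left, hxm, hmm]
    linarith [Real.sin_pos_of_pos_of_lt_pi hθ hθπ]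

theorem inner_normalize_eq_zero_iff {q w : E} : ⟪q, normalize w⟫ = 0 ↔ ⟪q, w⟫ = 0 := by
  by_cases hw : w = 0
  · simp [hw]
  · simp [NormedSpace.normalize, real_inner_smul_right, hw]

theorem eq_of_inner_normalize_le {a b v : E} (ha : ‖a‖ = 1) (hb : ‖b‖ = 1) {s t : ℝ}
    (hs : 0 < s) (ht : 0 < t) (hpos : 0 < ⟪v, normalize (s • a + t • b)⟫)
    (hva : ⟪v, normalize (s • a + t • b)⟫ ≤ ⟪v, a⟫)
    (hvb : ⟪v, normalize (s • a + t • b)⟫ ≤ ⟪v, b⟫) : a = b := by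
  set w := s • a + t • b
  have hnorm : ‖s • a‖ + ‖t • b‖ ≤ ‖w‖ := by
    have hw : ⟪v, normalize w⟫ * ‖w‖ = s * ⟪v, a⟫ + t * ⟪v, b⟫ := by
      rw [mul_comm, ← real_inner_smul_right, norm_smul_normalize, inner_add_right,
        real_inner_smul_right, real_inner_smul_right]
    rw [norm_smul, norm_smul, ha, hb, Real.norm_of_nonneg hs.le, Real.norm_of_nonneg ht.le]
    nlinarith
  by_contra hab
  have hray : ¬SameRay ℝ (s • a) (t • b) := fun h => by
    have := (h.pos_smul_left (inv_pos.2 hs)).pos_smul_right (inv_pos.2 ht)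
    simp only [smul_smul, inv_mul_cancel₀ hs.ne', inv_mul_cancel₀ ht.ne', one_smul] at this
    exact hab (this.eq_of_norm_eq (ha.trans hb.symm))
  exact (norm_add_lt_of_not_sameRay hray).not_ge hnorm

end InnerProductSpace

namespace SphericalGeom

open NormedSpace

variable {n : ℕ}

theorem norm_eq_one_of_mem_unitSphere {x : Esp n} (hx : x ∈ unitSphere n) : ‖x‖ = 1 :=
  mem_sphere_zero_iff_norm.1 hx

theorem IsSphConvexBody.isCompact {C : Set (Esp n)} (hC : IsSphConvexBody C) : IsCompact C :=
  (isCompact_sphere 0 1).of_isClosed_subset hC.1 hC.2.1.1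

theorem sdist_le_sdiam {C : Set (Esp n)} {p q : Esp n} (hp : p ∈ C) (hq : q ∈ C) :
    sdist p q ≤ sdiam C :=
  le_csSup (by refine ⟨Real.pi, ?_⟩; rintro _ ⟨_, _, _, _, rfl⟩; exact Real.arccos_le_pi _)
    ⟨p, hp, q, hq, rfl⟩

theorem exists_sdist_eq_sdiam {C : Set (Esp n)} (hC : IsCompact C) (hne : C.Nonempty) :
    ∃ p ∈ C, ∃ q ∈ C, sdist p q = sdiam C := by
  have hcont : Continuous fun pq : Esp n × Esp n => sdist pq.1 pq.2 :=
    Real.continuous_arccos.comp (continuous_fst.inner continuous_snd)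
  obtain ⟨⟨p, q⟩, ⟨hp, hq⟩, hmax⟩ :=
    (hC.prod hC).exists_isMaxOn (hne.prod hne) hcont.continuousOn
  have hgreatest : IsGreatest {t | ∃ p ∈ C, ∃ q ∈ C, t = sdist p q} (sdist p q) := by
    refine ⟨⟨p, hp, q, hq, rfl⟩, ?_⟩
    rintro _ ⟨x, hx, y, hy, rfl⟩
    exact isMaxOn_iff.1 hmax (x, y) ⟨hx, hy⟩
  exact ⟨p, hp, q, hq, hgreatest.csSup_eq.symm⟩

theorem inner_pos_of_ball_inter_subset {C : Set (Esp n)} (hC : C ⊆ unitSphere n)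
    (hnonneg : ∀ x ∈ C, ∀ y ∈ C, 0 ≤ ⟪x, y⟫) {x : Esp n} (hx : x ∈ C) {ε : ℝ} (hε : 0 < ε)
    (hball : Metric.ball x ε ∩ unitSphere n ⊆ C) {m : Esp n} (hm : m ∈ C) : 0 < ⟪x, m⟫ := by
  refine (hnonneg x hx m hm).lt_of_ne fun hxm => ?_
  obtain ⟨y, hy, hyx, hym⟩ := exists_norm_eq_one_dist_lt_inner_neg
    (norm_eq_one_of_mem_unitSphere (hC hx)) (norm_eq_one_of_mem_unitSphere (hC hm)) hxm.symm hε
  exact hym.not_ge (hnonneg y (hball ⟨hyx, mem_sphere_zero_iff_norm.2 hy⟩) m hm)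

theorem eq_or_eq_or_exists_pos_of_mem_arc {a b z : Esp n} (ha : ‖a‖ = 1) (hb : ‖b‖ = 1)
    (hz : z ∈ arc a b) :
    z = a ∨ z = b ∨ ∃ s t : ℝ, 0 < s ∧ 0 < t ∧ z = normalize (s • a + t • b) := by
  obtain ⟨s, t, hs, ht, hw, hz⟩ := hz
  replace hz : z = normalize (s • a + t • b) := hz
  subst hz
  rcases hs.eq_or_lt with rfl | hs
  · have ht : 0 < t := ht.lt_of_ne (by rintro rfl; simp at hw)
    right; left
    simp [normalize_smul_of_pos ht, normalize_eq_self_of_norm_eq_one hb]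
  rcases ht.eq_or_lt with rfl | ht
  · left
    simp [normalize_smul_of_pos hs, normalize_eq_self_of_norm_eq_one ha]
  exact Or.inr (Or.inr ⟨s, t, hs, ht, rfl⟩)

theorem isExtremePt_of_isMinOn {C : Set (Esp n)} (hC : IsSphConvex C) {q v e : Esp n}
    (hq : ∀ x ∈ C, 0 ≤ ⟪q, x⟫) (hv : ∀ x ∈ C, 0 < ⟪v, x⟫) (he : e ∈ {x ∈ C | ⟪q, x⟫ = 0})
    (hmin : IsMinOn (⟪v, ·⟫) {x ∈ C | ⟪q, x⟫ = 0} e) : IsExtremePt C e := by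
  obtain ⟨hCsph, hCanti, hCarc⟩ := hC
  refine ⟨he.1, fun x hx => hCsph hx.1, fun x hx hx' => hCanti x hx.1 hx'.1,
    fun a ha b hb z hz => ⟨hCarc a ha.1 b hb.1 hz, fun hze => ?_⟩⟩
  have hze : z = e := hze
  have ha1 := norm_eq_one_of_mem_unitSphere (hCsph ha.1)
  have hb1 := norm_eq_one_of_mem_unitSphere (hCsph hb.1)
  rcases eq_or_eq_or_exists_pos_of_mem_arc ha1 hb1 hz with rfl | rfl | ⟨s, t, hs, ht, rfl⟩
  · exact ha.2 hze
  · exact hb.2 hze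
  have hqw := inner_normalize_eq_zero_iff.1 (hze ▸ he.2)
  rw [inner_add_right, real_inner_smul_right, real_inner_smul_right] at hqw
  have hqa := hq a ha.1
  have hqb := hq b hb.1
  have haF : a ∈ {x ∈ C | ⟪q, x⟫ = 0} := ⟨ha.1, by nlinarith⟩
  have hbF : b ∈ {x ∈ C | ⟪q, x⟫ = 0} := ⟨hb.1, by nlinarith⟩
  obtain rfl := eq_of_inner_normalize_le ha1 hb1 hs ht (hze ▸ hv e he.1)
    (hze ▸ hmin haF) (hze ▸ hmin hbF)
  rw [← add_smul, normalize_smul_of_pos (add_pos hs ht),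
    normalize_eq_self_of_norm_eq_one ha1] at hze
  exact ha.2 hze

end SphericalGeom

open SphericalGeom Real

theorem exists_extreme_at_diameter_pi_div_two_general (d : ℕ)
    (C : Set (Esp (d + 1))) (hC : IsSphConvexBody C)
    (hdiam : sdiam C = Real.pi / 2) :
    ∃ p ∈ C, ∃ q ∈ C, sdist p q = Real.pi / 2 ∧
      (IsExtremePt C p ∨ IsExtremePt C q) := by
  have hcpt := hC.isCompact
  obtain ⟨-, hconv, x₀, hx₀, ε, hε, hball⟩ := hC
  obtain ⟨p, hp, q, hq, hpq⟩ := exists_sdist_eq_sdiam hcpt ⟨x₀, hx₀⟩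
  have hnonneg : ∀ x ∈ C, ∀ y ∈ C, 0 ≤ ⟪x, y⟫ := fun x hx y hy =>
    arccos_le_pi_div_two.1 (hdiam ▸ sdist_le_sdiam hx hy)
  set F := {x ∈ C | ⟪q, x⟫ = 0}
  have hpF : p ∈ F :=
    ⟨hp, by rw [real_inner_comm]; exact arccos_eq_pi_div_two.1 (hpq.trans hdiam)⟩
  have hF : IsCompact F := hcpt.inter_right (isClosed_eq (by fun_prop) continuous_const)
  obtain ⟨e, he, hmin⟩ := hF.exists_isMinOn ⟨p, hpF⟩
    (show Continuous (⟪x₀, ·⟫ : Esp (d + 1) → ℝ) by fun_prop).continuousOn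
  refine ⟨e, he.1, q, hq, ?_, Or.inl (isExtremePt_of_isMinOn hconv (hnonneg q hq)
    (fun m hm => inner_pos_of_ball_inter_subset hconv.1 hnonneg hx₀ hε hball hm) he hmin)⟩
  rw [sdist, real_inner_comm, he.2, arccos_zero]

/-- A spherically convex body `C ⊂ S^d` with `diam(C) = π/2` has two
points at spherical distance `π/2` at least one of which is extreme. -/
theorem exists_extreme_at_diameter_pi_div_two (d : ℕ) (hd : 2 ≤ d)
    (C : Set (Esp (d + 1))) (hC : IsSphConvexBody C)
    (hdiam : sdiam C = Real.pi / 2) :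
    ∃ p ∈ C, ∃ q ∈ C, sdist p q = Real.pi / 2 ∧
      (IsExtremePt C p ∨ IsExtremePt C q) :=
  exists_extreme_at_diameter_pi_div_two_general d C hC hdiam
end
end
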